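/- arXiv:1903.09793 — 3 statements merged into one kernel-verified Lean document; each statement's English description precedes it below -/
import Mathlib

section
/- Let T : ℝ^N_+ → ℝ^N_{++} be a continuous SI mapping and let T_∞ be its asymptotic mapping. Then T has a fixed point (i.e., there exists x ∈ ℝ^N_+ with T(x) = x) if and only if ρ(T_∞) < 1. -/
open Filter Topology Function Set

/-!
If `T x = x`, scalability gives `T∞ x < x`, so `T∞ x ≤ θ • x` for some `θ < 1`, and the
Collatz–Wielandt comparison bounds every eigenvalue of `T∞` by `θ`. If `T` has no fixed point,
the sub-fixed points `x ≤ T x` are unbounded (otherwise the increasing orbit of `0` would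
converge to a fixed point), and normalised limits of them give `y ≠ 0` with `y ≤ T∞ y`. A
nonlinear Perron–Frobenius argument turns this into an eigenvector of `T∞` with eigenvalue at
least `1`: in logarithmic coordinates the perturbations `T∞ + δ ‖·‖` are topical maps, which
have eigenvectors by Banach's fixed point theorem, and these accumulate as `δ → 0`.
-/

section Orthant

variable {ι : Type*}

theorem le_norm_smul_one [Fintype ι] (x : ι → ℝ) : x ≤ ‖x‖ • 1 := fun i => by
  simpa using (le_abs_self (x i)).trans (norm_le_pi_norm x i)

theorem norm_le_norm_of_nonneg_of_le [Fintype ι] {x y : ι → ℝ} (hx : 0 ≤ x)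
    (hxy : x ≤ y) : ‖x‖ ≤ ‖y‖ :=
  (pi_norm_le_iff_of_nonneg (norm_nonneg y)).2 fun i => by
    rw [Real.norm_of_nonneg (hx i)]
    exact (hxy i).trans ((le_abs_self _).trans (norm_le_pi_norm y i))

theorem exists_mem_Ioo_le_smul_of_lt [Finite ι] {x y : ι → ℝ} (h : ∀ i, y i < x i) :
    ∃ θ ∈ Ioo (0 : ℝ) 1, y ≤ θ • x := by
  have hθ : ∀ᶠ θ in 𝓝[<] (1 : ℝ), y ≤ θ • x := by
    refine eventually_all.2 fun i => ?_
    have hlim : Tendsto (fun θ : ℝ => θ * x i) (𝓝[<] 1) (𝓝 (1 * x i)) :=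
      (tendsto_id.mul_const (x i)).mono_left nhdsWithin_le_nhds
    exact (hlim.eventually_const_lt (by simpa using h i)).mono fun θ hθ => hθ.le
  exact (hθ.and (Ioo_mem_nhdsLT zero_lt_one)).exists.imp fun θ h => ⟨h.2, h.1⟩

theorem eventually_smul_le_nhdsWithin [Finite ι] {x : ι → ℝ} (hx : 0 ≤ x) {t : ℝ}
    (ht : t < 1) : ∀ᶠ y in 𝓝[Ici 0] x, t • x ≤ y := by
  refine eventually_all.2 fun j => ?_
  rcases (hx j).eq_or_lt with hj | hj <;> simp only [Pi.zero_apply] at hj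
  · filter_upwards [self_mem_nhdsWithin] with y hy
    simpa [← hj] using hy j
  · have hlt : t * x j < x j := by nlinarith
    exact ((((continuous_apply j).tendsto x).eventually_const_lt hlt).filter_mono
      nhdsWithin_le_nhds).mono fun y hy => hy.le

theorem ContinuousOn.le_of_forall_le_add_smul_one {G : (ι → ℝ) → ι → ℝ}
    (hG : ContinuousOn G (Ici 0)) {y : ι → ℝ} (hy : 0 ≤ y)
    (h : ∀ ε : ℝ, 0 < ε → y ≤ G (y + ε • 1)) : y ≤ G y := by
  have hlim : Tendsto (fun ε : ℝ => y + ε • 1) (𝓝[>] 0) (𝓝[Ici 0] y) := by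
    refine tendsto_nhdsWithin_iff.2 ⟨?_, eventually_nhdsWithin_of_forall fun ε hε =>
      add_nonneg hy (smul_nonneg (le_of_lt hε) zero_le_one)⟩
    have : Tendsto (fun ε : ℝ => y + ε • 1) (𝓝 0) (𝓝 (y + (0 : ℝ) • 1)) :=
      tendsto_const_nhds.add (tendsto_id.smul_const 1)
    simpa using this.mono_left nhdsWithin_le_nhds
  exact fun i => ge_of_tendsto
    (((continuous_apply i).tendsto _).comp ((hG y hy).tendsto.comp hlim))
    (eventually_nhdsWithin_of_forall fun ε hε => h ε hε i)

end Orthant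

section Topical

variable {ι : Type*} [Fintype ι] {F : (ι → ℝ) → ι → ℝ}

theorem Monotone.lipschitzWith_one_of_map_add_const (hF : Monotone F)
    (hadd : ∀ u c, F (u + const ι c) = F u + const ι c) : LipschitzWith 1 F := by
  have hle : ∀ u v, F u ≤ F v + const ι (dist u v) := fun u v => by
    rw [← hadd]
    refine hF fun i => ?_
    have hi : u i - v i ≤ dist u v :=
      (le_abs_self _).trans ((Real.dist_eq _ _).symm.trans_le (dist_le_pi_dist u v i))
    simpa [add_comm] using hi
  refine LipschitzWith.of_dist_le_mul fun u v => ?_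
  rw [NNReal.coe_one, one_mul, dist_pi_le_iff dist_nonneg]
  intro i
  have h₁ := hle u v i
  have h₂ := hle v u i
  simp only [Pi.add_apply, const_apply, dist_comm v u] at h₁ h₂
  rw [Real.dist_eq, abs_sub_le_iff]
  constructor <;> linarith

/-- The fixed points `u` of the contractions `t • F`, `t < 1`, normalised by `u i₀`, satisfy
`v i = t * (F v i - F v i₀)`; they stay bounded, and a limit point as `t → 1` is the
eigenvector. -/
theorem exists_map_eq_add_const [Nonempty ι] (hF : Monotone F)
    (hadd : ∀ u c, F (u + const ι c) = F u + const ι c) {C : ℝ}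
    (hosc : ∀ u i j, F u i ≤ F u j + C) : ∃ v c, F v = v + const ι c := by
  have hlip := hF.lipschitzWith_one_of_map_add_const hadd
  obtain ⟨i₀⟩ := ‹Nonempty ι›
  set t : ℕ → ℝ := fun n => n / (n + 1)
  have ht0 : ∀ n, 0 ≤ t n := fun n => by positivity
  have ht1 : ∀ n, t n < 1 := fun n => (div_lt_one (by positivity)).2 (lt_add_one _)
  have hfix : ∀ n, ∃ u, t n • F u = u := fun n => by
    have hc : ContractingWith ⟨t n, ht0 n⟩ (fun u => t n • F u) := by
      refine ⟨ht1 n, ?_⟩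
      have := (lipschitzWith_smul (t n)).comp hlip
      rwa [mul_one, Real.nnnorm_of_nonneg (ht0 n)] at this
    exact ⟨_, hc.fixedPoint_isFixedPt⟩
  choose u hu using hfix
  set v : ℕ → ι → ℝ := fun n => u n + const ι (-u n i₀)
  have hv : ∀ n i, v n i = t n * (F (v n) i - F (v n) i₀) := fun n i => by
    have hi := congrFun (hu n) i
    have hi₀ := congrFun (hu n) i₀
    simp only [v, hadd, Pi.add_apply, Pi.smul_apply, const_apply, smul_eq_mul] at hi hi₀ ⊢
    linear_combination hi₀ - hi
  have hC : 0 ≤ C := by simpa using hosc 0 i₀ i₀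
  have hbdd : ∀ n, v n ∈ Icc (const ι (-C)) (const ι C) := fun n => by
    have h : ∀ i, |v n i| ≤ C := fun i => by
      rw [hv, abs_mul, abs_of_nonneg (ht0 n)]
      refine (mul_le_of_le_one_left (abs_nonneg _) (ht1 n).le).trans ?_
      exact abs_sub_le_iff.2 ⟨by linarith [hosc (v n) i i₀], by linarith [hosc (v n) i₀ i]⟩
    exact ⟨fun i => (abs_le.1 (h i)).1, fun i => (abs_le.1 (h i)).2⟩
  obtain ⟨w, -, φ, hφ, hw⟩ := isCompact_Icc.tendsto_subseq hbdd
  refine ⟨w, F w i₀, funext fun i => ?_⟩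
  have hFw : Tendsto (fun k => F (v (φ k))) atTop (𝓝 (F w)) :=
    (hlip.continuous.tendsto w).comp hw
  have hlim : Tendsto (fun k => v (φ k) i) atTop (𝓝 (1 * (F w i - F w i₀))) := by
    refine (((tendsto_natCast_div_add_atTop (1 : ℝ)).comp hφ.tendsto_atTop).mul
      (((continuous_apply i).tendsto _).comp hFw |>.sub
        (((continuous_apply i₀).tendsto _).comp hFw))).congr fun k => ?_
    exact (hv (φ k) i).symm
  have := tendsto_nhds_unique (((continuous_apply i).tendsto w).comp hw) hlim
  simp only [Pi.add_apply, const_apply] at this ⊢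
  linarith

end Topical

section GIMap

variable {ι : Type*}

/-- The GI mappings of the paper: nonnegative, monotone and positively homogeneous on the
nonnegative orthant. -/
structure IsGIMap (G : (ι → ℝ) → ι → ℝ) : Prop where
  nonneg : ∀ x, 0 ≤ x → 0 ≤ G x
  mono : ∀ x y, 0 ≤ x → x ≤ y → G x ≤ G y
  map_smul : ∀ c : ℝ, 0 ≤ c → ∀ x, 0 ≤ x → G (c • x) = c • G x

def coneEigenvalues (G : (ι → ℝ) → ι → ℝ) : Set ℝ :=
  {μ | 0 ≤ μ ∧ ∃ x, 0 ≤ x ∧ x ≠ 0 ∧ G x = μ • x}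

namespace IsGIMap

variable {G : (ι → ℝ) → ι → ℝ} (hG : IsGIMap G)
include hG

/-- Collatz–Wielandt comparison: for `c = max (y / x)`, `y ≤ c • x` with equality at some `i`,
and there `ν * y i ≤ G y i ≤ c * G x i ≤ θ * y i`. -/
theorem le_of_smul_le_of_le_smul [Finite ι] {x y : ι → ℝ} {ν θ : ℝ} (hx : ∀ i, 0 < x i)
    (hGx : G x ≤ θ • x) (hy : 0 ≤ y) (hy0 : y ≠ 0) (hGy : ν • y ≤ G y) :
    ν ≤ θ := by
  obtain ⟨j, hj⟩ := (Pi.lt_def.1 (lt_of_le_of_ne hy (Ne.symm hy0))).2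
  have : Nonempty ι := ⟨j⟩
  obtain ⟨i, hi⟩ := Finite.exists_max fun k => y k / x k
  set c := y i / x i
  have hc : 0 < c := (div_pos hj (hx j)).trans_le (hi j)
  have hyc : y ≤ c • x := fun k => (div_le_iff₀ (hx k)).1 (hi k)
  have hcx : c * x i = y i := div_mul_cancel₀ _ (hx i).ne'
  have hyi : 0 < y i := hcx ▸ mul_pos hc (hx i)
  have hGyc : G y i ≤ c * G x i := by
    simpa [hG.map_smul c hc.le x fun k => (hx k).le] using hG.mono y _ hy hyc i
  refine le_of_mul_le_mul_right ?_ hyi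
  calc ν * y i ≤ G y i := by simpa using hGy i
    _ ≤ c * (θ * x i) := hGyc.trans (mul_le_mul_of_nonneg_left (by simpa using hGx i) hc.le)
    _ = θ * y i := by rw [← hcx]; ring

theorem le_norm_smul_map_one [Fintype ι] {x : ι → ℝ} (hx : 0 ≤ x) :
    G x ≤ ‖x‖ • G 1 := by
  simpa [hG.map_smul _ (norm_nonneg x) 1 zero_le_one] using hG.mono x _ hx (le_norm_smul_one x)

theorem apply_le_norm_mul [Fintype ι] {x : ι → ℝ} (hx : 0 ≤ x) (i : ι) :
    G x i ≤ ‖x‖ * ‖G 1‖ :=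
  (by simpa using hG.le_norm_smul_map_one hx i : G x i ≤ ‖x‖ * G 1 i).trans
    (mul_le_mul_of_nonneg_left ((Real.le_norm_self _).trans (norm_le_pi_norm _ i)) (norm_nonneg x))

theorem bddAbove_coneEigenvalues [Fintype ι] : BddAbove (coneEigenvalues G) :=
  ⟨‖G 1‖, fun _ ⟨_, _, hy, hy0, hGy⟩ =>
    hG.le_of_smul_le_of_le_smul (fun _ => one_pos) (le_norm_smul_one _) hy hy0 hGy.ge⟩

theorem sSup_coneEigenvalues_le [Finite ι] {x : ι → ℝ} {θ : ℝ} (hx : ∀ i, 0 < x i)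
    (hGx : G x ≤ θ • x) (hθ : 0 ≤ θ) : sSup (coneEigenvalues G) ≤ θ :=
  Real.sSup_le
    (fun _ ⟨_, _, hy, hy0, hGy⟩ => hG.le_of_smul_le_of_le_smul hx hGx hy hy0 hGy.ge) hθ

/-- Lower semicontinuity: near `x`, every `y ≥ 0` dominates `t • x` for `t < 1`. -/
theorem eventually_lt_apply [Finite ι] {x : ι → ℝ} (hx : 0 ≤ x) {a : ℝ} {i : ι}
    (ha : a < G x i) : ∀ᶠ y in 𝓝[Ici 0] x, a < G y i := by
  have hlim : Tendsto (fun t : ℝ => t * G x i) (𝓝[<] 1) (𝓝 (1 * G x i)) :=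
    (tendsto_id.mul_const _).mono_left nhdsWithin_le_nhds
  obtain ⟨t, hat, ht⟩ :=
    ((hlim.eventually_const_lt (by simpa using ha)).and (Ioo_mem_nhdsLT zero_lt_one)).exists
  filter_upwards [eventually_smul_le_nhdsWithin hx ht.2, self_mem_nhdsWithin] with y hty hy
  calc a < t * G x i := hat
    _ = G (t • x) i := by simp [hG.map_smul t ht.1.le x hx]
    _ ≤ G y i := hG.mono _ _ (smul_nonneg ht.1.le hx) hty i

theorem add_mul_norm [Fintype ι] {δ : ℝ} (hδ : 0 ≤ δ) :
    IsGIMap fun x i => G x i + δ * ‖x‖ where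
  nonneg x hx i := add_nonneg (hG.nonneg x hx i) (mul_nonneg hδ (norm_nonneg x))
  mono x y hx hxy i :=
    add_le_add (hG.mono x y hx hxy i)
      (mul_le_mul_of_nonneg_left (norm_le_norm_of_nonneg_of_le hx hxy) hδ)
  map_smul c hc x hx := funext fun i => by
    simp only [hG.map_smul c hc x hx, norm_smul, Real.norm_of_nonneg hc, Pi.smul_apply,
      smul_eq_mul]
    ring

/-- In the coordinates `u = log x`, the lower bound makes `G` a topical map of bounded
oscillation. -/
theorem exists_pos_eigenvector_of_mul_norm_le [Fintype ι] [Nonempty ι] {a : ℝ} (ha : 0 < a)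
    (hGa : ∀ x, 0 ≤ x → ∀ i, a * ‖x‖ ≤ G x i) :
    ∃ w : ι → ℝ, (∀ i, 0 < w i) ∧ ‖w‖ = 1 ∧ ∃ μ : ℝ, G w = μ • w := by
  obtain ⟨i₀⟩ := ‹Nonempty ι›
  set E : (ι → ℝ) → ι → ℝ := fun u i => Real.exp (u i)
  have hE0 : ∀ u, 0 ≤ E u := fun u i => (Real.exp_pos _).le
  have hEnorm : ∀ u, 0 < ‖E u‖ := fun u =>
    norm_pos_iff.2 fun h => (Real.exp_pos (u i₀)).ne' (congrFun h i₀)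
  have hGE : ∀ u i, 0 < G (E u) i := fun u i =>
    (mul_pos ha (hEnorm u)).trans_le (hGa _ (hE0 u) i)
  set F : (ι → ℝ) → ι → ℝ := fun u i => Real.log (G (E u) i)
  have hFmono : Monotone F := fun u v huv i =>
    Real.log_le_log (hGE u i) (hG.mono _ _ (hE0 u) (fun j => Real.exp_le_exp.2 (huv j)) i)
  have hFadd : ∀ u c, F (u + const ι c) = F u + const ι c := fun u c => by
    have hEc : E (u + const ι c) = Real.exp c • E u :=
      funext fun i => by simp [E, Real.exp_add, mul_comm]
    funext i
    simp only [F, hEc, hG.map_smul _ (Real.exp_pos c).le _ (hE0 u), Pi.smul_apply, smul_eq_mul,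
      Real.log_mul (Real.exp_pos c).ne' (hGE u i).ne', Real.log_exp, Pi.add_apply, const_apply]
    ring
  have hFosc : ∀ u i j, F u i ≤ F u j + (Real.log ‖G 1‖ - Real.log a) := fun u i j => by
    have hi : G (E u) i ≤ ‖G 1‖ * ‖E u‖ :=
      mul_comm ‖E u‖ _ ▸ hG.apply_le_norm_mul (hE0 u) i
    have hG1 : 0 < ‖G 1‖ := pos_of_mul_pos_left ((hGE u i).trans_le hi) (hEnorm u).le
    have hlogi := Real.log_le_log (hGE u i) hi
    have hlogj := Real.log_le_log (mul_pos ha (hEnorm u)) (hGa _ (hE0 u) j)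
    rw [Real.log_mul hG1.ne' (hEnorm u).ne'] at hlogi
    rw [Real.log_mul ha.ne' (hEnorm u).ne'] at hlogj
    simp only [F]
    linarith
  obtain ⟨v, c, hv⟩ := exists_map_eq_add_const hFmono hFadd hFosc
  have hEv : G (E v) = Real.exp c • E v := funext fun i => by
    have hvi := congrFun hv i
    simp only [F, Pi.add_apply, const_apply] at hvi
    rw [Pi.smul_apply, smul_eq_mul, ← Real.exp_log (hGE v i), hvi, Real.exp_add, mul_comm]
  refine ⟨‖E v‖⁻¹ • E v, fun i => mul_pos (inv_pos.2 (hEnorm v)) (Real.exp_pos _), ?_,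
    Real.exp c, ?_⟩
  · rw [norm_smul, norm_inv, norm_norm, inv_mul_cancel₀ (hEnorm v).ne']
  · rw [hG.map_smul _ (inv_nonneg.2 (hEnorm v).le) _ (hE0 v), hEv, smul_comm]

theorem exists_perturbed_eigenvector [Fintype ι] [Nonempty ι] {δ : ℝ} (hδ : 0 < δ) :
    ∃ w : ι → ℝ, (∀ i, 0 < w i) ∧ ‖w‖ = 1 ∧
      ∃ μ : ℝ, μ ≤ ‖G 1‖ + δ ∧ G w + δ • 1 = μ • w := by
  obtain ⟨w, hw0, hw1, μ, hμ⟩ :=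
    (hG.add_mul_norm hδ.le).exists_pos_eigenvector_of_mul_norm_le hδ
      fun x hx i => le_add_of_nonneg_left (hG.nonneg x hx i)
  have hw : 0 ≤ w := fun i => (hw0 i).le
  have hμw : G w + δ • 1 = μ • w := funext fun i => by simpa [hw1] using congrFun hμ i
  refine ⟨w, hw0, hw1, μ, ?_, hμw⟩
  have hGw : ‖G w‖ ≤ ‖G 1‖ :=
    norm_le_norm_of_nonneg_of_le (hG.nonneg w hw) (by simpa [hw1] using hG.le_norm_smul_map_one hw)
  calc μ ≤ ‖μ • w‖ := by rw [norm_smul, hw1, mul_one]; exact Real.le_norm_self μ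
    _ ≤ ‖G w‖ + ‖δ • (1 : ι → ℝ)‖ := hμw ▸ norm_add_le _ _
    _ ≤ ‖G 1‖ + δ := by
      rw [norm_smul, norm_one, mul_one, Real.norm_of_nonneg hδ.le]
      linarith

/-- Eigenvectors of the perturbations `G + δ ‖·‖` with `δ → 0` accumulate at an eigenvector
of `G`; the Collatz–Wielandt bound keeps their eigenvalues at least `ν`. -/
theorem exists_eigenvector_ge [Fintype ι] (hGc : ContinuousOn G (Ici 0)) {y : ι → ℝ}
    {ν : ℝ} (hy : 0 ≤ y) (hy0 : y ≠ 0) (hGy : ν • y ≤ G y) :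
    ∃ μ, ν ≤ μ ∧ ∃ x, 0 ≤ x ∧ x ≠ 0 ∧ G x = μ • x := by
  have : Nonempty ι := let ⟨i, _⟩ := Function.ne_iff.1 hy0; ⟨i⟩
  set δ : ℕ → ℝ := fun n => 1 / (n + 1)
  have hδ : ∀ n, 0 < δ n := fun n => by positivity
  choose w hw0 hw1 μ hμM hμw using fun n => hG.exists_perturbed_eigenvector (hδ n)
  have hw : ∀ n, 0 ≤ w n := fun n i => (hw0 n i).le
  have hνμ : ∀ n, ν ≤ μ n := fun n => hG.le_of_smul_le_of_le_smul (hw0 n)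
    (hμw n ▸ le_add_of_nonneg_right (smul_nonneg (hδ n).le zero_le_one)) hy hy0 hGy
  have hmem : ∀ n, (w n, μ n) ∈ Icc (0 : ι → ℝ) 1 ×ˢ Icc ν (‖G 1‖ + 1) := fun n =>
    ⟨⟨hw n, by simpa [hw1] using le_norm_smul_one (w n)⟩, hνμ n,
      (hμM n).trans (by gcongr; exact div_le_one_of_le₀ (by simp) (by positivity))⟩
  obtain ⟨⟨x, μ'⟩, ⟨⟨hx, -⟩, hνμ', -⟩, φ, hφ, hlim⟩ :=
    (isCompact_Icc.prod isCompact_Icc).tendsto_subseq hmem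
  have hwx : Tendsto (fun k => w (φ k)) atTop (𝓝 x) := (continuous_fst.tendsto _).comp hlim
  have hμμ' : Tendsto (fun k => μ (φ k)) atTop (𝓝 μ') :=
    (continuous_snd.tendsto _).comp hlim
  have hx1 : ‖x‖ = 1 := tendsto_nhds_unique hwx.norm (by simp [hw1])
  refine ⟨μ', hνμ', x, hx, fun h => by simp [h] at hx1, ?_⟩
  have hGwx : Tendsto (fun k => G (w (φ k))) atTop (𝓝 (G x)) :=
    (hGc x hx).tendsto.comp (tendsto_nhdsWithin_iff.2 ⟨hwx, .of_forall fun k => hw _⟩)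
  have hδ0 : Tendsto (fun k => δ (φ k)) atTop (𝓝 0) :=
    tendsto_one_div_add_atTop_nhds_zero_nat.comp hφ.tendsto_atTop
  simpa using tendsto_nhds_unique ((hGwx.add (hδ0.smul_const 1)).congr fun k => hμw (φ k))
    (hμμ'.smul hwx)

end IsGIMap

end GIMap

section Asymptotic

variable {ι : Type*} {T Tinf : (ι → ℝ) → ι → ℝ}

def IsScalable (T : (ι → ℝ) → ι → ℝ) : Prop :=
  ∀ x : ι → ℝ, 0 ≤ x → ∀ α : ℝ, 1 < α → ∀ i, T (α • x) i < α * T x i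

theorem IsScalable.div_le_div (hscal : IsScalable T) {x : ι → ℝ} (hx : 0 ≤ x) {h h' : ℝ}
    (hh : 0 < h) (hhh' : h ≤ h') (i : ι) :
    T (h' • x) i / h' ≤ T (h • x) i / h := by
  rcases hhh'.eq_or_lt with rfl | hlt
  · exact le_rfl
  have hs := hscal (h • x) (smul_nonneg hh.le hx) (h' / h) ((one_lt_div hh).2 hlt) i
  rw [smul_smul, div_mul_cancel₀ _ hh.ne'] at hs
  have hh' : 0 < h' := hh.trans hlt
  calc T (h' • x) i / h' ≤ h' / h * T (h • x) i / h' := by gcongr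
    _ = T (h • x) i / h := by field_simp

/-- The orbit of `0` increases, and it is bounded because it consists of sub-fixed points; its
limit is a fixed point. -/
theorem exists_map_eq_of_isBounded [Fintype ι] (hT : ∀ x : ι → ℝ, 0 ≤ x → 0 ≤ T x)
    (hmono : ∀ x y : ι → ℝ, 0 ≤ x → x ≤ y → T x ≤ T y)
    (hcont : ContinuousOn T (Ici 0)) (hB : Bornology.IsBounded {x | 0 ≤ x ∧ x ≤ T x}) :
    ∃ x, 0 ≤ x ∧ T x = x := by
  set u : ℕ → ι → ℝ := fun k => T^[k] 0
  have hu0 : ∀ k, 0 ≤ u k := fun k => by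
    induction k with
    | zero => exact le_rfl
    | succ k ih => simpa [u, iterate_succ_apply'] using hT _ ih
  have hsub : ∀ k, u k ≤ u (k + 1) := fun k => by
    induction k with
    | zero => simpa [u] using hT 0 le_rfl
    | succ k ih => simpa [u, iterate_succ_apply'] using hmono _ _ (hu0 k) ih
  have hsubT : ∀ k, u k ≤ T (u k) := fun k => by simpa [u, iterate_succ_apply'] using hsub k
  have hbdd : BddAbove (range u) := BddAbove.mono (range_subset_iff.2 fun k =>
    (show u k ∈ {x | 0 ≤ x ∧ x ≤ T x} from ⟨hu0 k, hsubT k⟩)) hB.bddAbove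
  have hlim := tendsto_atTop_ciSup (monotone_nat_of_le_succ hsub) hbdd
  have hs : 0 ≤ ⨆ k, u k := (hu0 0).trans (le_ciSup hbdd 0)
  refine ⟨_, hs, tendsto_nhds_unique ((hcont _ hs).tendsto.comp
    (tendsto_nhdsWithin_iff.2 ⟨hlim, .of_forall hu0⟩)) ?_⟩
  exact (hlim.comp (tendsto_add_atTop_nat 1)).congr fun k => by simp [u, iterate_succ_apply']

variable (hTinf : ∀ x : ι → ℝ, 0 ≤ x → ∀ i,
  Tendsto (fun h : ℝ => T (h • x) i / h) atTop (𝓝 (Tinf x i)))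
include hTinf

theorem asymptotic_le_div (hscal : IsScalable T) {x : ι → ℝ} (hx : 0 ≤ x) {h : ℝ}
    (hh : 0 < h) (i : ι) : Tinf x i ≤ T (h • x) i / h :=
  le_of_tendsto (hTinf x hx i)
    (eventually_atTop.2 ⟨h, fun _ hh' => hscal.div_le_div hx hh hh' i⟩)

theorem asymptotic_lt_of_map_eq (hscal : IsScalable T) {x : ι → ℝ} (hx : 0 ≤ x)
    (hTx : T x = x) (i : ι) : Tinf x i < x i := by
  calc Tinf x i ≤ T ((2 : ℝ) • x) i / 2 := asymptotic_le_div hTinf hscal hx two_pos i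
    _ < x i := by
      rw [div_lt_iff₀ two_pos]
      simpa [hTx, mul_comm] using hscal x hx 2 one_lt_two i

theorem tendsto_div_smul_smul {c : ℝ} (hc : 0 ≤ c) {x : ι → ℝ} (hx : 0 ≤ x) (i : ι) :
    Tendsto (fun h : ℝ => T (h • c • x) i / h) atTop (𝓝 (c * Tinf x i)) := by
  rcases hc.eq_or_lt with rfl | hc
  · simpa using tendsto_const_nhds.div_atTop tendsto_id
  refine (((hTinf x hx i).comp (tendsto_id.atTop_mul_const hc)).const_mul c).congr' ?_
  filter_upwards [eventually_gt_atTop 0] with h hh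
  simp only [comp_apply, id, smul_smul]
  field_simp

theorem isGIMap_asymptotic (hT : ∀ x : ι → ℝ, 0 ≤ x → 0 ≤ T x)
    (hmono : ∀ x y : ι → ℝ, 0 ≤ x → x ≤ y → T x ≤ T y) : IsGIMap Tinf where
  nonneg x hx i := ge_of_tendsto (hTinf x hx i) <| (eventually_gt_atTop 0).mono fun _ hh =>
    div_nonneg (hT _ (smul_nonneg hh.le hx) i) hh.le
  mono x y hx hxy i := le_of_tendsto_of_tendsto (hTinf x hx i) (hTinf y (hx.trans hxy) i) <|
    (eventually_gt_atTop 0).mono fun _ hh => div_le_div_of_nonneg_right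
      (hmono _ _ (smul_nonneg hh.le hx) (smul_le_smul_of_nonneg_left hxy hh.le) i) hh.le
  map_smul _ hc _ hx := funext fun i =>
    tendsto_nhds_unique (hTinf _ (smul_nonneg hc hx) i) (tendsto_div_smul_smul hTinf hc hx i)

/-- Upper semicontinuity: `Tinf` is the infimum of the continuous maps `T (h • ·) / h`. -/
theorem eventually_asymptotic_lt (hscal : IsScalable T) (hcont : ContinuousOn T (Ici 0))
    {x : ι → ℝ} (hx : 0 ≤ x) {i : ι} {a : ℝ} (ha : Tinf x i < a) :
    ∀ᶠ y in 𝓝[Ici 0] x, Tinf y i < a := by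
  obtain ⟨h, hh, hha⟩ :=
    ((eventually_gt_atTop 0).and ((hTinf x hx i).eventually_lt_const ha)).exists
  have hTh : ContinuousWithinAt (fun y => T (h • y)) (Ici 0) x :=
    (hcont _ (smul_nonneg hh.le hx)).comp (continuous_const_smul h).continuousWithinAt
      fun y hy => mem_Ici.2 (smul_nonneg hh.le (mem_Ici.1 hy))
  have hcw : ContinuousWithinAt (fun y => T (h • y) i / h) (Ici 0) x :=
    ((continuous_apply i).continuousAt.comp_continuousWithinAt hTh).div_const h
  filter_upwards [hcw.eventually_lt_const hha, self_mem_nhdsWithin] with y hy hy0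
  exact (asymptotic_le_div hTinf hscal hy0 hh i).trans_lt hy

theorem continuousOn_asymptotic [Finite ι] (hscal : IsScalable T)
    (hcont : ContinuousOn T (Ici 0)) (hG : IsGIMap Tinf) : ContinuousOn Tinf (Ici 0) :=
  fun _ hx => continuousWithinAt_pi.2 fun _ => tendsto_order.2
    ⟨fun _ ha => hG.eventually_lt_apply hx ha,
      fun _ ha => eventually_asymptotic_lt hTinf hscal hcont hx ha⟩

/-- Eventually `x k ≤ H k • (y + ε • 1)`, so `x k / H k ≤ T (H k • (y + ε • 1)) / H k`. -/
theorem le_asymptotic_add_smul_one [Finite ι]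
    (hmono : ∀ x y : ι → ℝ, 0 ≤ x → x ≤ y → T x ≤ T y) {α : Type*} {l : Filter α}
    [l.NeBot]
    {x : α → ι → ℝ} (hx : ∀ k, 0 ≤ x k ∧ x k ≤ T (x k)) {H : α → ℝ}
    (hH : Tendsto H l atTop) {y : ι → ℝ} (hy0 : 0 ≤ y)
    (hy : Tendsto (fun k => (H k)⁻¹ • x k) l (𝓝 y)) {ε : ℝ} (hε : 0 < ε) :
    y ≤ Tinf (y + ε • 1) := by
  intro i
  have hyε : 0 ≤ y + ε • 1 := add_nonneg hy0 (smul_nonneg hε.le zero_le_one)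
  have hclose : ∀ᶠ k in l, (H k)⁻¹ • x k ≤ y + ε • 1 := eventually_all.2 fun j =>
    ((((continuous_apply j).tendsto y).comp hy).eventually_lt_const
      (by simpa using hε : y j < (y + ε • 1) j)).mono fun _ h => h.le
  refine le_of_tendsto_of_tendsto (((continuous_apply i).tendsto y).comp hy)
    ((hTinf _ hyε i).comp hH) ?_
  filter_upwards [hclose, hH.eventually_gt_atTop 0] with k hk hHk
  have hxk : x k ≤ H k • (y + ε • 1) := by
    simpa [smul_inv_smul₀ hHk.ne'] using smul_le_smul_of_nonneg_left hk hHk.le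
  calc ((H k)⁻¹ • x k) i = x k i / H k := by simp [div_eq_inv_mul]
    _ ≤ T (H k • (y + ε • 1)) i / H k :=
      div_le_div_of_nonneg_right (((hx k).2.trans (hmono _ _ (hx k).1 hxk)) i) hHk.le

theorem exists_le_asymptotic_of_not_isBounded [Fintype ι]
    (hmono : ∀ x y : ι → ℝ, 0 ≤ x → x ≤ y → T x ≤ T y)
    (hGc : ContinuousOn Tinf (Ici 0))
    (hB : ¬Bornology.IsBounded {x | 0 ≤ x ∧ x ≤ T x}) :
    ∃ y, 0 ≤ y ∧ y ≠ 0 ∧ y ≤ Tinf y := by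
  rw [isBounded_iff_forall_norm_le] at hB
  push Not at hB
  choose x hx hlarge using fun n : ℕ => hB n
  have hnorm : Tendsto (fun n => ‖x n‖) atTop atTop :=
    tendsto_atTop_mono (fun n => (hlarge n).le) tendsto_natCast_atTop_atTop
  have hpos : ∀ n, 0 < ‖x n‖ := fun n => (Nat.cast_nonneg n).trans_lt (hlarge n)
  have hmem : ∀ n, ‖x n‖⁻¹ • x n ∈ Icc (0 : ι → ℝ) 1 := fun n =>
    ⟨smul_nonneg (inv_nonneg.2 (hpos n).le) (hx n).1, by
      simpa [smul_smul, inv_mul_cancel₀ (hpos n).ne'] using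
        smul_le_smul_of_nonneg_left (le_norm_smul_one (x n)) (inv_nonneg.2 (hpos n).le)⟩
  obtain ⟨y, ⟨hy0, -⟩, φ, hφ, hy⟩ := isCompact_Icc.tendsto_subseq hmem
  have hy1 : ‖y‖ = 1 :=
    tendsto_nhds_unique hy.norm (by simp [norm_smul, inv_mul_cancel₀ (hpos _).ne'])
  exact ⟨y, hy0, fun h => by simp [h] at hy1, hGc.le_of_forall_le_add_smul_one hy0 fun ε hε =>
    le_asymptotic_add_smul_one hTinf hmono (fun k => hx (φ k)) (hnorm.comp hφ.tendsto_atTop)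
      hy0 hy hε⟩

end Asymptotic

/-- A continuous SI mapping T has a fixed point if and only if
the spectral radius of its asymptotic mapping T_∞ is strictly less than one. -/
theorem stmt17 {N : ℕ} (T : (Fin N → ℝ) → (Fin N → ℝ))
    (hpos : ∀ x : Fin N → ℝ, 0 ≤ x → ∀ i, 0 < T x i)
    (hmono : ∀ x y : Fin N → ℝ, 0 ≤ x → x ≤ y → T x ≤ T y)
    (hscal : ∀ x : Fin N → ℝ, 0 ≤ x → ∀ α : ℝ, 1 < α → ∀ i, T (α • x) i < α * T x i)
    (hcont : ContinuousOn T {x : Fin N → ℝ | 0 ≤ x})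
    (Tinf : (Fin N → ℝ) → (Fin N → ℝ))
    (hTinf : ∀ x : Fin N → ℝ, 0 ≤ x → ∀ i,
      Tendsto (fun h : ℝ => T (h • x) i / h) atTop (nhds (Tinf x i))) :
    (∃ x : Fin N → ℝ, 0 ≤ x ∧ T x = x) ↔
      sSup {μ : ℝ | 0 ≤ μ ∧
        ∃ x : Fin N → ℝ, 0 ≤ x ∧ x ≠ 0 ∧ Tinf x = μ • x} < 1 := by
  have hT : ∀ x : Fin N → ℝ, 0 ≤ x → 0 ≤ T x := fun x hx i => (hpos x hx i).le
  have hG : IsGIMap Tinf := isGIMap_asymptotic hTinf hT hmono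
  have hGc : ContinuousOn Tinf (Ici 0) := continuousOn_asymptotic hTinf hscal hcont hG
  change _ ↔ sSup (coneEigenvalues Tinf) < 1
  constructor
  · rintro ⟨x, hx, hTx⟩
    obtain ⟨θ, ⟨hθ0, hθ1⟩, hθ⟩ :=
      exists_mem_Ioo_le_smul_of_lt (asymptotic_lt_of_map_eq hTinf hscal hx hTx)
    exact (hG.sSup_coneEigenvalues_le (fun i => hTx ▸ hpos x hx i) hθ hθ0.le).trans_lt hθ1
  · intro hρ
    by_contra hfix
    obtain ⟨y, hy0, hy, hyT⟩ := exists_le_asymptotic_of_not_isBounded hTinf hmono hGc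
      fun hB => hfix (exists_map_eq_of_isBounded hT hmono hcont hB)
    obtain ⟨μ, hμ, x, hx0, hx, hGx⟩ := hG.exists_eigenvector_ge hGc hy0 hy (by rwa [one_smul])
    have := le_csSup hG.bddAbove_coneEigenvalues ⟨zero_le_one.trans hμ, x, hx0, hx, hGx⟩
    linarith
end

section
/- Let ‖·‖ be a monotone norm on ℝ^N and T : ℝ^N_+ → ℝ^N_{++} a continuous SI mapping. Suppose (x⋆, λ⋆) ∈ ℝ^N_{++} × ℝ_{++} satisfies T(x⋆) = λ⋆ x⋆ and ‖x⋆‖ = 1. Then there exists x′ ∈ ℝ^N_+ with T(x′) = x′ and ‖x′‖ ≤ 1 if and only if λ⋆ ≤ 1. -/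
/-!
If `λ⋆ ≤ 1`, then `T x⋆ ≤ x⋆`, so the iterates `Tⁿ x⋆` decrease to a fixed point below `x⋆`,
whose norm is at most `‖x⋆‖ = 1`. Conversely, scalability makes a positive fixed point `x′`
dominate every `y ≥ 0` with `y ≤ T y`: otherwise compare `y ≤ c x′` for the least such `c > 1`
at a coordinate where it is attained. For `λ⋆ > 1`, `x⋆ ≤ λ⋆ x⋆ = T x⋆` gives `x⋆ ≤ x′`, so
`λ⋆ x⋆ = T x⋆ ≤ T x′ = x′` and `λ⋆ ≤ ‖x′‖ ≤ 1`.
-/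

open Filter Topology Set Finset

theorem exists_isFixedPt_le_of_map_le {α : Type*} [ConditionallyCompleteLattice α]
    [TopologicalSpace α] [InfConvergenceClass α] [T2Space α] {T : α → α} {a x₀ : α}
    (hmaps : ∀ x, a ≤ x → a ≤ T x) (hmono : ∀ x y, a ≤ x → x ≤ y → T x ≤ T y)
    (hcont : ContinuousOn T (Ici a)) (hx₀ : a ≤ x₀) (hTx₀ : T x₀ ≤ x₀) :
    ∃ x, a ≤ x ∧ x ≤ x₀ ∧ T x = x := by
  set u : ℕ → α := fun n => T^[n] x₀
  have hu : ∀ n, a ≤ u n := by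
    intro n
    induction n with
    | zero => exact hx₀
    | succ n ih => simpa only [u, Function.iterate_succ_apply'] using hmaps _ ih
  have hu_succ : ∀ n, u (n + 1) ≤ u n := by
    intro n
    induction n with
    | zero => exact hTx₀
    | succ n ih => simpa only [u, Function.iterate_succ_apply'] using hmono _ _ (hu _) ih
  have hbdd : BddBelow (range u) := ⟨a, forall_mem_range.2 hu⟩
  have hlim : Tendsto u atTop (𝓝 (⨅ n, u n)) :=
    tendsto_atTop_ciInf (antitone_nat_of_succ_le hu_succ) hbdd
  have ha : a ≤ ⨅ n, u n := le_ciInf hu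
  refine ⟨⨅ n, u n, ha, ciInf_le hbdd 0, ?_⟩
  have hlim_within : Tendsto u atTop (𝓝[Ici a] (⨅ n, u n)) :=
    tendsto_nhdsWithin_iff.2 ⟨hlim, Eventually.of_forall hu⟩
  refine tendsto_nhds_unique ((hcont _ ha).tendsto.comp hlim_within) ?_
  simpa only [Function.comp_def, u, ← Function.iterate_succ_apply' T] using
    (tendsto_add_atTop_iff_nat 1).2 hlim

theorem le_of_le_map_of_isFixedPt {ι : Type*} [Finite ι] {T : (ι → ℝ) → (ι → ℝ)}
    (hmono : ∀ x y : ι → ℝ, 0 ≤ x → x ≤ y → T x ≤ T y)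
    (hscal : ∀ x : ι → ℝ, 0 ≤ x → ∀ α : ℝ, 1 < α → ∀ i, T (α • x) i < α * T x i)
    {x y : ι → ℝ} (hx : ∀ i, 0 < x i) (hfix : T x = x) (hy : 0 ≤ y) (hyT : y ≤ T y) :
    y ≤ x := by
  have := Fintype.ofFinite ι
  by_contra hyx
  obtain ⟨j, hj⟩ : ∃ j, x j < y j := by simpa [Pi.le_def] using hyx
  obtain ⟨i, -, hi⟩ := exists_max_image univ (fun k => y k / x k) ⟨j, mem_univ j⟩
  set c := y i / x i
  have hc : 1 < c := ((one_lt_div (hx j)).2 hj).trans_le (hi j (mem_univ j))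
  have hyc : y ≤ c • x := fun k => (div_le_iff₀ (hx k)).1 (hi k (mem_univ k))
  have : y i < y i := calc
    y i ≤ T y i := hyT i
    _ ≤ T (c • x) i := hmono y _ hy hyc i
    _ < c * T x i := hscal x (fun k => (hx k).le) c hc i
    _ = y i := by rw [hfix, div_mul_cancel₀ _ (hx i).ne']
  exact lt_irrefl _ this

theorem stmt18_general {N : ℕ} (T : (Fin N → ℝ) → (Fin N → ℝ))
    (hpos : ∀ x : Fin N → ℝ, 0 ≤ x → ∀ i, 0 < T x i)
    (hmono : ∀ x y : Fin N → ℝ, 0 ≤ x → x ≤ y → T x ≤ T y)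
    (hscal : ∀ x : Fin N → ℝ, 0 ≤ x → ∀ α : ℝ, 1 < α → ∀ i, T (α • x) i < α * T x i)
    (hcont : ContinuousOn T {x : Fin N → ℝ | 0 ≤ x})
    (ν : (Fin N → ℝ) → ℝ)
    (hνs : ∀ (a : ℝ) (x : Fin N → ℝ), ν (a • x) = |a| * ν x)
    (hνm : ∀ x y : Fin N → ℝ, 0 ≤ x → x ≤ y → ν x ≤ ν y)
    (xs : Fin N → ℝ) (lams : ℝ) (hxs : ∀ i, 0 < xs i)
    (heig : T xs = lams • xs) (hns : ν xs = 1) :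
    (∃ x' : Fin N → ℝ, 0 ≤ x' ∧ T x' = x' ∧ ν x' ≤ 1) ↔ lams ≤ 1 := by
  have hxs0 : 0 ≤ xs := fun i => (hxs i).le
  constructor
  · rintro ⟨x', hx'0, hfix, hx'ν⟩
    by_contra! hlams
    have hxs_le : xs ≤ x' :=
      le_of_le_map_of_isFixedPt hmono hscal (fun i => hfix ▸ hpos x' hx'0 i) hfix hxs0
        (heig ▸ le_smul_of_one_le_left hxs0 hlams.le)
    have hsmul_le : lams • xs ≤ x' := heig ▸ hfix ▸ hmono xs x' hxs0 hxs_le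
    have := hνm _ _ (smul_nonneg (zero_le_one.trans hlams.le) hxs0) hsmul_le
    rw [hνs, hns, abs_of_pos (zero_lt_one.trans hlams), mul_one] at this
    linarith
  · intro hlams
    obtain ⟨x', hx'0, hx'le, hfix⟩ :=
      exists_isFixedPt_le_of_map_le (fun x hx i => (hpos x hx i).le) hmono hcont hxs0
        (heig ▸ smul_le_of_le_one_left hxs0 hlams)
    exact ⟨x', hx'0, hfix, hns ▸ hνm _ _ hx'0 hx'le⟩

/-- Let T be a continuous SI mapping and ‖·‖ a monotone norm, and
let (x⋆, λ⋆) be the positive normalized eigenpair of T. Then T has a fixed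
point x′ with ‖x′‖ ≤ 1 if and only if λ⋆ ≤ 1. -/
theorem stmt18 {N : ℕ} (T : (Fin N → ℝ) → (Fin N → ℝ))
    (hpos : ∀ x : Fin N → ℝ, 0 ≤ x → ∀ i, 0 < T x i)
    (hmono : ∀ x y : Fin N → ℝ, 0 ≤ x → x ≤ y → T x ≤ T y)
    (hscal : ∀ x : Fin N → ℝ, 0 ≤ x → ∀ α : ℝ, 1 < α → ∀ i, T (α • x) i < α * T x i)
    (hcont : ContinuousOn T {x : Fin N → ℝ | 0 ≤ x})
    (ν : (Fin N → ℝ) → ℝ)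
    (hν0 : ∀ x, ν x = 0 ↔ x = 0)
    (hνs : ∀ (a : ℝ) (x : Fin N → ℝ), ν (a • x) = |a| * ν x)
    (hνt : ∀ x y : Fin N → ℝ, ν (x + y) ≤ ν x + ν y)
    (hνm : ∀ x y : Fin N → ℝ, 0 ≤ x → x ≤ y → ν x ≤ ν y)
    (xs : Fin N → ℝ) (lams : ℝ) (hxs : ∀ i, 0 < xs i) (hlams : 0 < lams)
    (heig : T xs = lams • xs) (hns : ν xs = 1) :
    (∃ x' : Fin N → ℝ, 0 ≤ x' ∧ T x' = x' ∧ ν x' ≤ 1) ↔ lams ≤ 1 :=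
  stmt18_general T hpos hmono hscal hcont ν hνs hνm xs lams hxs heig hns
end

section
/- Fix M ∈ ℕ, positive constants B, K, σ² > 0, a power vector p ∈ ℝ^M_{++}, positive pathloss coefficients g_{k,j} > 0 and positive demands d_j > 0 for users j in a finite nonempty set N_i assigned to base station i ∈ {1,…,M}. Define the i-th load coupling coordinate function t⁽ⁱ⁾ : ℝ^M_+ → ℝ_{++} by t⁽ⁱ⁾(x) = Σ_{j∈N_i} d_j / ( K · B · log₂( 1 + p_i g_{i,j} / ( Σ_{k≠i} x_k p_k g_{k,j} + σ² ) ) ). Then for every x ∈ ℝ^M_+, lim_{h→∞} t⁽ⁱ⁾(hx)/h = Σ_{j∈N_i} ( (ln 2) d_j / (K B p_i g_{i,j}) ) · Σ_{k≠i} x_k p_k g_{k,j}; i.e., the asymptotic function of t⁽ⁱ⁾ is the linear function x ↦ Σ_{k≠i} [M]_{i,k} (p_k/p_i) x_k with [M]_{i,k} = Σ_{j∈N_i} (ln 2) d_j g_{k,j} / (K B g_{i,j}) for k ≠ i. -/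
open Filter Topology Real

/-! With `S = ∑_{k ≠ i} x_k p_k g_{k,j}` and `a = p_i g_{i,j}`, the `j`-th summand of `t⁽ⁱ⁾(h x) / h`
is `(ln 2 · d_j / (K B)) · (h · log (1 + a / (h S + σ²)))⁻¹`. Since `y · log (1 + a / y) → a` as
`y → ∞`, the bracket tends to `a / S` when `S > 0`, and it is `h` times a constant when `S = 0`;
in both cases its inverse tends to `S / a`. -/

theorem tendsto_mul_log_one_add_div_mul_add {a S σ : ℝ} (hS : 0 < S) :
    Tendsto (fun h => h * log (1 + a / (h * S + σ))) atTop (𝓝 (a / S)) := by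
  refine tendsto_mul_log_one_add_of_tendsto ?_
  have hden : Tendsto (fun h : ℝ => S + σ / h) atTop (𝓝 S) := by
    simpa using tendsto_const_nhds.add ((tendsto_const_nhds (x := σ)).div_atTop tendsto_id)
  refine ((tendsto_const_nhds (x := a)).div hden hS.ne').congr' ?_
  filter_upwards [eventually_ne_atTop 0] with h hh
  simp only [Pi.div_apply]
  rw [show S + σ / h = (h * S + σ) / h by rw [add_div, mul_div_cancel_left₀ _ hh],
    div_div_eq_mul_div, mul_div_assoc', mul_comm a h]

theorem tendsto_inv_mul_log_one_add_div_mul_add {a S σ : ℝ} (ha : a ≠ 0) (hS : 0 ≤ S) :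
    Tendsto (fun h => (h * log (1 + a / (h * S + σ)))⁻¹) atTop (𝓝 (S / a)) := by
  rcases hS.eq_or_lt with rfl | hS
  · simpa [mul_inv] using tendsto_inv_atTop_zero.const_mul (log (1 + a / σ))⁻¹
  · simpa using (tendsto_mul_log_one_add_div_mul_add (σ := σ) hS).inv₀ (div_ne_zero ha hS.ne')

theorem stmt19_general {M : ℕ} (i : Fin M) {J : Type} [Fintype J]
    (B K σ2 : ℝ)
    (p : Fin M → ℝ) (hp : ∀ k, 0 < p k)
    (g : Fin M → J → ℝ) (hg : ∀ k j, 0 < g k j)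
    (d : J → ℝ)
    (x : Fin M → ℝ) (hx : 0 ≤ x) :
    Tendsto (fun h : ℝ =>
        (∑ j : J, d j / (K * (B * Real.logb 2 (1 + p i * g i j /
          ((∑ k ∈ Finset.univ.erase i, (h • x) k * p k * g k j) + σ2))))) / h)
      atTop
      (nhds (∑ j : J, Real.log 2 * d j / (K * B * p i * g i j) *
        ∑ k ∈ Finset.univ.erase i, x k * p k * g k j)) := by
  simp only [Finset.sum_div]
  refine tendsto_finsetSum _ fun j _ => ?_
  set S := ∑ k ∈ Finset.univ.erase i, x k * p k * g k j
  have hscale (h : ℝ) : ∑ k ∈ Finset.univ.erase i, (h • x) k * p k * g k j = h * S := by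
    simp only [S, Finset.mul_sum, Pi.smul_apply, smul_eq_mul, mul_assoc]
  have hS : 0 ≤ S := Finset.sum_nonneg fun k _ =>
    mul_nonneg (mul_nonneg (hx k) (hp k).le) (hg k j).le
  have hlim := (tendsto_inv_mul_log_one_add_div_mul_add (σ := σ2)
    (mul_pos (hp i) (hg i j)).ne' hS).const_mul (log 2 * d j / (K * B))
  convert hlim using 1
  · ext h
    rw [hscale, logb]
    simp only [div_eq_mul_inv, mul_inv, inv_inv]
    ring
  · congr 1
    ring

/-- The asymptotic function of the i-th coordinate function of
the load coupling mapping is the linear function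
x ↦ Σ_{j∈N_i} ((ln 2) d_j/(K B p_i g_{i,j})) Σ_{k≠i} x_k p_k g_{k,j}. -/
theorem stmt19 {M : ℕ} (i : Fin M) {J : Type} [Fintype J] [Nonempty J]
    (B K σ2 : ℝ) (hB : 0 < B) (hK : 0 < K) (hσ : 0 < σ2)
    (p : Fin M → ℝ) (hp : ∀ k, 0 < p k)
    (g : Fin M → J → ℝ) (hg : ∀ k j, 0 < g k j)
    (d : J → ℝ) (hd : ∀ j, 0 < d j)
    (x : Fin M → ℝ) (hx : 0 ≤ x) :
    Tendsto (fun h : ℝ =>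
        (∑ j : J, d j / (K * (B * Real.logb 2 (1 + p i * g i j /
          ((∑ k ∈ Finset.univ.erase i, (h • x) k * p k * g k j) + σ2))))) / h)
      atTop
      (nhds (∑ j : J, Real.log 2 * d j / (K * B * p i * g i j) *
        ∑ k ∈ Finset.univ.erase i, x k * p k * g k j)) :=
  stmt19_general i B K σ2 p hp g hg d x hx
end
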